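/- For all real numbers x and y, the hyperbolic distance d(x,y) between i·e^x and 1 + i·e^y in the upper half-plane satisfies the upper bound d(x,y) ≤ |x − y| + 1/max(e^x, e^y). -/

import Mathlib

/-! Both points lie on vertical geodesics, along which the distance is `|x - x'|`; joining them
horizontally at the common height `e^(max x y)` costs at most `e^(-max x y)`, since the hyperbolic
distance is bounded by the Euclidean one divided by the height. -/

open UpperHalfPlane

/-- The point `i·e^x` of the upper half-plane. -/
noncomputable def ptA (x : ℝ) : UpperHalfPlane :=
  ⟨(Real.exp x : ℂ) * Complex.I, by simp [Complex.mul_I_im, Complex.exp_ofReal_re, Real.exp_pos]⟩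

/-- The point `1 + i·e^y` of the upper half-plane. -/
noncomputable def ptB (y : ℝ) : UpperHalfPlane :=
  ⟨1 + (Real.exp y : ℂ) * Complex.I, by
    simp [Complex.add_im, Complex.mul_I_im, Complex.exp_ofReal_re, Real.exp_pos]⟩

/-- The hyperbolic distance between `i·e^x` and `1 + i·e^y`. -/
noncomputable def hypd (x y : ℝ) : ℝ := dist (ptA x) (ptB y)

namespace UpperHalfPlane

theorem dist_le_abs_re_sub_div_im {z w : ℍ} (h : z.im = w.im) :
    dist z w ≤ |z.re - w.re| / z.im := by
  have hcoe : dist (z : ℂ) w = |z.re - w.re| := Complex.dist_of_im_eq h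
  have hsqrt : √(z.im * w.im) = z.im := by rw [← h, Real.sqrt_mul_self z.im_pos.le]
  simpa only [hcoe, hsqrt] using dist_le_dist_coe_div_sqrt z w

end UpperHalfPlane

@[simp] lemma ptA_re (x : ℝ) : (ptA x).re = 0 := by simp [ptA, UpperHalfPlane.re]

@[simp] lemma ptA_im (x : ℝ) : (ptA x).im = Real.exp x := by
  simp [ptA, UpperHalfPlane.im, Complex.exp_ofReal_re]

@[simp] lemma ptB_re (y : ℝ) : (ptB y).re = 1 := by simp [ptB, UpperHalfPlane.re]

@[simp] lemma ptB_im (y : ℝ) : (ptB y).im = Real.exp y := by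
  simp [ptB, UpperHalfPlane.im, Complex.exp_ofReal_re]

lemma dist_ptA_ptA (x x' : ℝ) : dist (ptA x) (ptA x') = |x - x'| := by
  rw [dist_of_re_eq (by simp), ptA_im, ptA_im, Real.log_exp, Real.log_exp, Real.dist_eq]

lemma dist_ptB_ptB (y y' : ℝ) : dist (ptB y) (ptB y') = |y - y'| := by
  rw [dist_of_re_eq (by simp), ptB_im, ptB_im, Real.log_exp, Real.log_exp, Real.dist_eq]

lemma dist_ptA_ptB_self_le (m : ℝ) : dist (ptA m) (ptB m) ≤ 1 / Real.exp m := by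
  simpa using dist_le_abs_re_sub_div_im (z := ptA m) (w := ptB m) (by simp)

theorem hypd_le (x y : ℝ) :
    hypd x y ≤ |x - y| + 1 / max (Real.exp x) (Real.exp y) := by
  rcases le_total x y with hxy | hyx
  · rw [max_eq_right (Real.exp_le_exp.2 hxy)]
    calc hypd x y ≤ dist (ptA x) (ptA y) + dist (ptA y) (ptB y) := dist_triangle _ _ _
      _ ≤ |x - y| + 1 / Real.exp y := by rw [dist_ptA_ptA]; gcongr; exact dist_ptA_ptB_self_le y
  · rw [max_eq_left (Real.exp_le_exp.2 hyx)]
    calc hypd x y ≤ dist (ptA x) (ptB x) + dist (ptB x) (ptB y) := dist_triangle _ _ _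
      _ ≤ 1 / Real.exp x + |x - y| := by rw [dist_ptB_ptB]; gcongr; exact dist_ptA_ptB_self_le x
      _ = |x - y| + 1 / Real.exp x := add_comm _ _
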